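/- For every integer a, the following identity holds in the power series ring (ℤ[q,q⁻¹])[[t]]: (∑_{r≥0} [r+1]_{q^a} [r+1]_q² t^r) · (1−t)(1−qt)(1−q²t)(1−q^a t)(1−q^{a+1} t)(1−q^{a+2} t) = 1 + q(q^a+1)t − 2(q²+q+1)q^{a+1}t² + (q^a+1)q^{a+3}t³ + q^{2a+4}t⁴. -/

import Mathlib

open PowerSeries LaurentPolynomial

noncomputable def qInt (a : ℤ) (k : ℕ) : LaurentPolynomial ℤ :=
  ∑ i ∈ Finset.range k, T ((i : ℤ) * a)

/-!
Write `y = qᵃ` and `H(x) = ∑ [r+1]_y xʳ tʳ = 1 / ((1 - x t)(1 - y x t))`. Since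
`(q - 1)[r+1]_q = q^{r+1} - 1`, multiplying the series by `(q - 1)²` turns it into
`q² H(q²) - 2q H(q) + H(1)`; against the six linear factors this is a polynomial identity in `t`.
The factor `(q - 1)²` cancels because `ℤ[q,q⁻¹]⟦t⟧` is a domain.
-/

namespace PowerSeries

variable {R : Type*} [CommRing R]

theorem mk_pow_mul_one_sub_C_mul_X (x : R) : (mk fun n => x ^ n) * (1 - C x * X) = 1 := by
  simpa [rescale_mk, rescale_X] using congrArg (rescale x) (mk_one_mul_one_sub_eq_one R)

theorem mk_geom_sum_mul_pow_eq_mul (x y : R) :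
    (mk fun r => (∑ i ∈ Finset.range (r + 1), y ^ i) * x ^ r) =
      (mk fun n => (y * x) ^ n) * mk fun n => x ^ n := by
  ext r
  simp only [coeff_mul, coeff_mk]
  rw [Finset.Nat.sum_antidiagonal_eq_sum_range_succ (fun i j => (y * x) ^ i * x ^ j),
    Finset.sum_mul]
  refine Finset.sum_congr rfl fun i hi => ?_
  rw [mul_pow, mul_assoc, ← pow_add, Nat.add_sub_cancel' (Finset.mem_range_succ_iff.mp hi)]

theorem mk_geom_sum_mul_pow_mul (x y : R) :
    (mk fun r => (∑ i ∈ Finset.range (r + 1), y ^ i) * x ^ r) *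
      ((1 - C x * X) * (1 - C (y * x) * X)) = 1 := by
  rw [mk_geom_sum_mul_pow_eq_mul, mul_comm (1 - C x * X), mul_mul_mul_comm,
    mk_pow_mul_one_sub_C_mul_X, mk_pow_mul_one_sub_C_mul_X, one_mul]

theorem C_sub_one_sq_mul_mk_mul_geom_sum_sq (g : ℕ → R) (q : R) :
    C ((q - 1) ^ 2) * (mk fun r => g r * (∑ i ∈ Finset.range (r + 1), q ^ i) ^ 2) =
      C (q ^ 2) * (mk fun r => g r * (q ^ 2) ^ r) - C (2 * q) * (mk fun r => g r * q ^ r) +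
        mk g := by
  ext r
  have h := geom_sum_mul q (r + 1)
  simp only [map_add, map_sub, coeff_C_mul, coeff_mk]
  linear_combination g r * ((∑ i ∈ Finset.range (r + 1), q ^ i) * (q - 1) + q ^ (r + 1) - 1) * h

theorem mk_geom_sum_mul_geom_sum_sq_mul [IsDomain R] {q : R} (hq : q ≠ 1) (y : R) :
    (mk fun r => (∑ i ∈ Finset.range (r + 1), y ^ i) * (∑ i ∈ Finset.range (r + 1), q ^ i) ^ 2) *
      ((1 - X) * (1 - C q * X) * (1 - C (q ^ 2) * X) * (1 - C y * X) * (1 - C (y * q) * X) *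
        (1 - C (y * q ^ 2) * X)) =
    1 + C (q * (y + 1)) * X - C (2 * (q ^ 2 + q + 1) * (y * q)) * X ^ 2 +
      C ((y + 1) * (y * q ^ 3)) * X ^ 3 + C (y ^ 2 * q ^ 4) * X ^ 4 := by
  have hC : C ((q - 1) ^ 2) ≠ (0 : R⟦X⟧) :=
    (map_ne_zero_iff _ C_injective).mpr (pow_ne_zero 2 (sub_ne_zero.mpr hq))
  refine mul_left_cancel₀ hC ?_
  rw [← mul_assoc, C_sub_one_sq_mul_mk_mul_geom_sum_sq]
  have h0 := mk_geom_sum_mul_pow_mul 1 y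
  have h1 := mk_geom_sum_mul_pow_mul q y
  have h2 := mk_geom_sum_mul_pow_mul (q ^ 2) y
  simp only [one_pow, mul_one, map_one, map_mul, map_add, map_sub, map_pow, map_ofNat] at h0 h1 h2 ⊢
  set Q : R⟦X⟧ := C q
  set Y : R⟦X⟧ := C y
  linear_combination (norm := ring)
    Q ^ 2 * ((1 - X) * (1 - Q * X) * (1 - Y * X) * (1 - Y * Q * X)) * h2
    - 2 * Q * ((1 - X) * (1 - Q ^ 2 * X) * (1 - Y * X) * (1 - Y * Q ^ 2 * X)) * h1
    + ((1 - Q * X) * (1 - Q ^ 2 * X) * (1 - Y * Q * X) * (1 - Y * Q ^ 2 * X)) * h0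

end PowerSeries

theorem qInt_eq_geom_sum (a : ℤ) (k : ℕ) : qInt a k = ∑ i ∈ Finset.range k, T a ^ i := by
  simp only [qInt, T_pow]

theorem LaurentPolynomial.T_one_ne_one : (T 1 : LaurentPolynomial ℤ) ≠ 1 := by
  rw [← T_zero]
  exact fun h => one_ne_zero (AddMonoidAlgebra.single_left_injective (R := ℤ) one_ne_zero h)

/-- For every integer `a`:
`(∑_{r≥0} [r+1]_{q^a} [r+1]_q² t^r) · (1−t)(1−qt)(1−q²t)(1−qᵃt)(1−q^{a+1}t)(1−q^{a+2}t)
 = 1 + q(qᵃ+1)t − 2(q²+q+1)q^{a+1}t² + (qᵃ+1)q^{a+3}t³ + q^{2a+4}t⁴`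
as formal power series in `t` with coefficients in `ℤ[q,q⁻¹]`. -/
theorem qInt_product_series_a11 (a : ℤ) :
    (PowerSeries.mk fun r : ℕ => qInt a (r + 1) * qInt 1 (r + 1) ^ 2) *
      ((1 - X) * (1 - PowerSeries.C (R := LaurentPolynomial ℤ) (T 1) * X) *
       (1 - PowerSeries.C (R := LaurentPolynomial ℤ) (T 2) * X) *
       (1 - PowerSeries.C (R := LaurentPolynomial ℤ) (T a) * X) *
       (1 - PowerSeries.C (R := LaurentPolynomial ℤ) (T (a + 1)) * X) *
       (1 - PowerSeries.C (R := LaurentPolynomial ℤ) (T (a + 2)) * X)) =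
    1 + PowerSeries.C (R := LaurentPolynomial ℤ) (T 1 * (T a + 1)) * X
      - PowerSeries.C (R := LaurentPolynomial ℤ) (2 * (T 2 + T 1 + 1) * T (a + 1)) * X ^ 2
      + PowerSeries.C (R := LaurentPolynomial ℤ) ((T a + 1) * T (a + 3)) * X ^ 3
      + PowerSeries.C (R := LaurentPolynomial ℤ) (T (2 * a + 4)) * X ^ 4 := by
  have h2 : (T 2 : LaurentPolynomial ℤ) = T 1 ^ 2 := by rw [T_pow]; norm_num
  have h3 : (T (a + 3) : LaurentPolynomial ℤ) = T a * T 1 ^ 3 := by rw [T_pow, ← T_add]; norm_num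
  have h4 : (T (2 * a + 4) : LaurentPolynomial ℤ) = T a ^ 2 * T 1 ^ 4 := by
    rw [T_pow, T_pow, ← T_add]; norm_num
  rw [h2, h3, h4, T_add a 1, T_add a 2, h2]
  simp only [qInt_eq_geom_sum]
  exact mk_geom_sum_mul_geom_sum_sq_mul T_one_ne_one (T a)
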